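/- arXiv:2201.13082 — 2 statements merged into one kernel-verified Lean document; each statement's English description precedes it below -/
import Mathlib

section
/- Let Φ : [t, T] → [0, ∞) be continuous and suppose there exist constants C > 0 such that for all s ∈ [t, T], Φ(s) ≤ C (s−t)^{1/2} ∫_t^s Φ(r)^{1/2} dr + C ∫_t^s Φ(r) dr. Then there is a constant C' (depending only on C and T−t) such that Φ(s) ≤ C' (s−t)^{3/2} for all s ∈ [t, T]. -/
open Set intervalIntegral

/-- A nonlinear Gronwall-type lemma: if a continuous nonnegative `Φ` on `[t, T]` satisfies
`Φ(s) ≤ C (s−t)^{1/2} ∫_t^s Φ(r)^{1/2} dr + C ∫_t^s Φ(r) dr`, then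
`Φ(s) ≤ C' (s−t)^{3/2}` for some constant `C'` depending only on `C` and `T − t`. -/
theorem gronwall_sqrt_bootstrap :
    ∀ C > (0 : ℝ), ∀ T t : ℝ, t ≤ T →
      ∃ C' : ℝ, ∀ Φ : ℝ → ℝ, ContinuousOn Φ (Set.Icc t T) →
        (∀ s ∈ Set.Icc t T, 0 ≤ Φ s) →
        (∀ s ∈ Set.Icc t T, Φ s ≤
            C * Real.sqrt (s - t) * (∫ r in t..s, Real.sqrt (Φ r)) +
              C * ∫ r in t..s, Φ r) →
        ∀ s ∈ Set.Icc t T, Φ s ≤ C' * (s - t) ^ ((3 : ℝ) / 2) := by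
  intro C hC T t htT
  obtain ⟨L, hLdef⟩ : ∃ L : ℝ, L = T - t := ⟨_, rfl⟩
  have hL0 : 0 ≤ L := by rw [hLdef]; linarith
  obtain ⟨B, hBdef⟩ : ∃ B : ℝ, B = C * Real.sqrt L / 2 + C := ⟨_, rfl⟩
  have hB0 : 0 < B := by
    have h1 : 0 ≤ C * Real.sqrt L / 2 := by positivity
    rw [hBdef]; linarith
  obtain ⟨ε, hεdef⟩ : ∃ e : ℝ, e = C * Real.sqrt L * L / 2 := ⟨_, rfl⟩
  have hε0 : 0 ≤ ε := by
    rw [hεdef]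
    exact div_nonneg (mul_nonneg (mul_nonneg hC.le (Real.sqrt_nonneg L)) hL0) (by norm_num)
  obtain ⟨M0, hM0def⟩ : ∃ m : ℝ, m = ε * Real.exp (B * L) := ⟨_, rfl⟩
  have hM0nn : 0 ≤ M0 := by rw [hM0def]; exact mul_nonneg hε0 (Real.exp_pos _).le
  obtain ⟨M1, hM1def⟩ : ∃ m : ℝ, m = C * Real.sqrt L * Real.sqrt M0 + C * M0 := ⟨_, rfl⟩
  have hM1nn : 0 ≤ M1 := by
    have h1 : 0 ≤ C * Real.sqrt L * Real.sqrt M0 :=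
      mul_nonneg (mul_nonneg hC.le (Real.sqrt_nonneg L)) (Real.sqrt_nonneg M0)
    have h2 : 0 ≤ C * M0 := mul_nonneg hC.le hM0nn
    rw [hM1def]; linarith
  refine ⟨(2 * C * Real.sqrt M1 / 3 + C * M1 / 2) * Real.sqrt L, ?_⟩
  intro Φ hΦc hΦ0 hineq
  -- basic integrability facts
  have hintΦ : ∀ s ∈ Icc t T, IntervalIntegrable Φ MeasureTheory.volume t s := by
    intro s hs
    apply ContinuousOn.intervalIntegrable
    rw [uIcc_of_le hs.1]
    exact hΦc.mono (Icc_subset_Icc le_rfl hs.2)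
  have hcsqrt : ContinuousOn (fun r => Real.sqrt (Φ r)) (Icc t T) :=
    Real.continuous_sqrt.comp_continuousOn hΦc
  have hintS : ∀ s ∈ Icc t T, IntervalIntegrable (fun r => Real.sqrt (Φ r))
      MeasureTheory.volume t s := by
    intro s hs
    apply ContinuousOn.intervalIntegrable
    rw [uIcc_of_le hs.1]
    exact hcsqrt.mono (Icc_subset_Icc le_rfl hs.2)
  set ψ : ℝ → ℝ := fun s => ∫ r in t..s, Φ r with hψdef
  have hψ0 : ∀ s ∈ Icc t T, 0 ≤ ψ s := by
    intro s hs
    exact intervalIntegral.integral_nonneg hs.1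
      (fun r hr => hΦ0 r ⟨hr.1, hr.2.trans hs.2⟩)
  have hS0 : ∀ s ∈ Icc t T, 0 ≤ ∫ r in t..s, Real.sqrt (Φ r) := by
    intro s hs
    exact intervalIntegral.integral_nonneg hs.1 (fun r _ => Real.sqrt_nonneg _)
  have hψc : ContinuousOn ψ (Icc t T) := by
    have h := intervalIntegral.continuousOn_primitive_interval
      (μ := MeasureTheory.volume) (f := Φ) (a := t) (b := T) ?_
    · rwa [uIcc_of_le htT] at h
    · rw [uIcc_of_le htT]
      exact hΦc.integrableOn_Icc
  have hψ' : ∀ x ∈ Ico t T, HasDerivWithinAt ψ (Φ x) (Ici x) x := by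
    intro x hx
    have hxT : x < T := hx.2
    have h1 : IntervalIntegrable Φ MeasureTheory.volume t x := hintΦ x ⟨hx.1, hx.2.le⟩
    have hmeas : StronglyMeasurableAtFilter Φ (nhdsWithin x (Ioi x)) MeasureTheory.volume := by
      refine ⟨Icc x T, ?_, ?_⟩
      · apply nhdsWithin_mono x (Ioi_subset_Ici le_rfl)
        rw [← nhdsWithin_Icc_eq_nhdsGE hxT]
        exact self_mem_nhdsWithin
      · exact (hΦc.mono (Icc_subset_Icc hx.1 le_rfl)).aestronglyMeasurable measurableSet_Icc
    have hcont : ContinuousWithinAt Φ (Ioi x) x := by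
      apply ContinuousWithinAt.mono _ (Ioi_subset_Ici le_rfl)
      rw [← continuousWithinAt_Icc_iff_Ici hxT]
      exact (hΦc.mono (Icc_subset_Icc hx.1 le_rfl)) x ⟨le_rfl, hxT.le⟩
    exact intervalIntegral.integral_hasDerivWithinAt_right h1 hmeas hcont
  -- Step 1: linear-in-ψ bound
  have key : ∀ s ∈ Icc t T, Φ s ≤ B * ψ s + ε := by
    intro s hs
    have hst : t ≤ s := hs.1
    have hsL : s - t ≤ L := by rw [hLdef]; linarith [hs.2]
    have hd0 : 0 ≤ s - t := sub_nonneg.2 hst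
    have hsq : Real.sqrt (s - t) ≤ Real.sqrt L := Real.sqrt_le_sqrt hsL
    have hS : (∫ r in t..s, Real.sqrt (Φ r)) ≤ ((s - t) + ψ s) / 2 := by
      have hint2 : IntervalIntegrable (fun r => (1 + Φ r) / 2) MeasureTheory.volume t s :=
        ((_root_.intervalIntegrable_const).add (hintΦ s hs)).div_const 2
      have h1 : (∫ r in t..s, Real.sqrt (Φ r)) ≤ ∫ r in t..s, (1 + Φ r) / 2 := by
        apply intervalIntegral.integral_mono_on hst (hintS s hs) hint2
        intro r hr
        have h0 := hΦ0 r ⟨hr.1, hr.2.trans hs.2⟩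
        nlinarith [Real.sq_sqrt h0, Real.sqrt_nonneg (Φ r), sq_nonneg (Real.sqrt (Φ r) - 1)]
      have h2 : (∫ r in t..s, (1 + Φ r) / 2) = ((s - t) + ψ s) / 2 := by
        rw [intervalIntegral.integral_div,
          intervalIntegral.integral_add _root_.intervalIntegrable_const (hintΦ s hs),
          integral_one]
      linarith [h1, h2.le, h2.ge]
    have hSnn := hS0 s hs
    have hψnn := hψ0 s hs
    have t1 : C * Real.sqrt (s - t) * (∫ r in t..s, Real.sqrt (Φ r)) ≤
        C * Real.sqrt L * ((L + ψ s) / 2) := by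
      have hb : ((s - t) + ψ s) / 2 ≤ (L + ψ s) / 2 := by linarith
      have hcc : C * Real.sqrt (s - t) ≤ C * Real.sqrt L :=
        mul_le_mul_of_nonneg_left hsq hC.le
      exact mul_le_mul hcc (hS.trans hb) hSnn (mul_nonneg hC.le (Real.sqrt_nonneg L))
    have hstart := hineq s hs
    have hfin : C * Real.sqrt L * ((L + ψ s) / 2) + C * ψ s = B * ψ s + ε := by
      rw [hBdef, hεdef]; ring
    calc Φ s ≤ C * Real.sqrt (s - t) * (∫ r in t..s, Real.sqrt (Φ r)) + C * ψ s := hstart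
      _ ≤ C * Real.sqrt L * ((L + ψ s) / 2) + C * ψ s := by linarith
      _ = B * ψ s + ε := hfin
  -- Gronwall
  have hbound : ∀ x ∈ Ico t T, ‖Φ x‖ ≤ B * ‖ψ x‖ + ε := by
    intro x hx
    have hx' : x ∈ Icc t T := ⟨hx.1, hx.2.le⟩
    rw [Real.norm_of_nonneg (hΦ0 x hx'), Real.norm_of_nonneg (hψ0 x hx')]
    exact key x hx'
  have hψle := norm_le_gronwallBound_of_norm_deriv_right_le (f := ψ) (f' := Φ)
    (δ := 0) (K := B) (ε := ε) (a := t) (b := T) hψc hψ' (by simp [hψdef]) hbound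
  have hM0 : ∀ s ∈ Icc t T, Φ s ≤ M0 := by
    intro s hs
    have h1 := hψle s hs
    rw [Real.norm_of_nonneg (hψ0 s hs), gronwallBound_of_K_ne_0 hB0.ne'] at h1
    have h2 := key s hs
    have hsL : s - t ≤ L := by rw [hLdef]; linarith [hs.2]
    have hexp : Real.exp (B * (s - t)) ≤ Real.exp (B * L) :=
      Real.exp_le_exp.2 (mul_le_mul_of_nonneg_left hsL hB0.le)
    have hBψ : B * ψ s ≤ ε * (Real.exp (B * (s - t)) - 1) := by
      have h3 := mul_le_mul_of_nonneg_left h1 hB0.le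
      have h4 : B * (0 * Real.exp (B * (s - t)) +
          ε / B * (Real.exp (B * (s - t)) - 1)) =
          ε * (Real.exp (B * (s - t)) - 1) := by
        field_simp
        ring
      linarith [h3, h4.le, h4.ge]
    have h5 : ε * Real.exp (B * (s - t)) ≤ ε * Real.exp (B * L) :=
      mul_le_mul_of_nonneg_left hexp hε0
    rw [hM0def]
    linarith
  -- Step 2: linear bound
  have step2 : ∀ s ∈ Icc t T, Φ s ≤ M1 * (s - t) := by
    intro s hs
    have hst : t ≤ s := hs.1
    have hsq : Real.sqrt (s - t) ≤ Real.sqrt L :=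
      Real.sqrt_le_sqrt (by rw [hLdef]; linarith [hs.2])
    have hS : (∫ r in t..s, Real.sqrt (Φ r)) ≤ Real.sqrt M0 * (s - t) := by
      have h1 : (∫ r in t..s, Real.sqrt (Φ r)) ≤ ∫ _ in t..s, Real.sqrt M0 := by
        apply intervalIntegral.integral_mono_on hst (hintS s hs) _root_.intervalIntegrable_const
        intro r hr
        exact Real.sqrt_le_sqrt (hM0 r ⟨hr.1, hr.2.trans hs.2⟩)
      rwa [intervalIntegral.integral_const, smul_eq_mul, mul_comm] at h1
    have hI : ψ s ≤ M0 * (s - t) := by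
      have h1 : ψ s ≤ ∫ _ in t..s, M0 := by
        apply intervalIntegral.integral_mono_on hst (hintΦ s hs) _root_.intervalIntegrable_const
        intro r hr
        exact hM0 r ⟨hr.1, hr.2.trans hs.2⟩
      rwa [intervalIntegral.integral_const, smul_eq_mul, mul_comm] at h1
    have hSnn := hS0 s hs
    have t1 : C * Real.sqrt (s - t) * (∫ r in t..s, Real.sqrt (Φ r)) ≤
        C * Real.sqrt L * (Real.sqrt M0 * (s - t)) := by
      have hcc : C * Real.sqrt (s - t) ≤ C * Real.sqrt L :=
        mul_le_mul_of_nonneg_left hsq hC.le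
      exact mul_le_mul hcc hS hSnn (mul_nonneg hC.le (Real.sqrt_nonneg L))
    have t2 : C * ψ s ≤ C * (M0 * (s - t)) := mul_le_mul_of_nonneg_left hI hC.le
    have hstart := hineq s hs
    calc Φ s ≤ C * Real.sqrt (s - t) * (∫ r in t..s, Real.sqrt (Φ r)) + C * ψ s := hstart
      _ ≤ C * Real.sqrt L * (Real.sqrt M0 * (s - t)) + C * (M0 * (s - t)) := by linarith
      _ = M1 * (s - t) := by rw [hM1def]; ring
  -- Step 3: bootstrap to the 3/2 power
  intro s hs
  have hst : t ≤ s := hs.1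
  have hd0 : 0 ≤ s - t := sub_nonneg.2 hst
  have hsq : Real.sqrt (s - t) ≤ Real.sqrt L :=
    Real.sqrt_le_sqrt (by rw [hLdef]; linarith [hs.2])
  have hrpow_nn : 0 ≤ (s - t) ^ ((3 : ℝ) / 2) := Real.rpow_nonneg hd0 _
  have hsqrt_int : (∫ r in t..s, Real.sqrt (r - t)) = 2 / 3 * (s - t) ^ ((3 : ℝ) / 2) := by
    have h1 := intervalIntegral.integral_comp_sub_right (a := t) (b := s)
      (fun u => Real.sqrt u) t
    rw [h1, sub_self]
    rw [intervalIntegral.integral_congr (g := fun u => u ^ ((1 : ℝ) / 2))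
      (fun u _ => Real.sqrt_eq_rpow u)]
    rw [integral_rpow (Or.inl (by norm_num))]
    rw [show (1 : ℝ) / 2 + 1 = 3 / 2 by norm_num, Real.zero_rpow (by norm_num)]
    ring
  have hlin_int : (∫ r in t..s, (r - t)) = (s - t) ^ 2 / 2 := by
    have h1 := intervalIntegral.integral_comp_sub_right (a := t) (b := s) (fun u => u) t
    rw [h1, sub_self, integral_id]
    norm_num
  have hS : (∫ r in t..s, Real.sqrt (Φ r)) ≤
      Real.sqrt M1 * (2 / 3 * (s - t) ^ ((3 : ℝ) / 2)) := by
    have hcont2 : Continuous fun r : ℝ => Real.sqrt M1 * Real.sqrt (r - t) :=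
      continuous_const.mul (Real.continuous_sqrt.comp (continuous_id.sub continuous_const))
    have h1 : (∫ r in t..s, Real.sqrt (Φ r)) ≤
        ∫ r in t..s, Real.sqrt M1 * Real.sqrt (r - t) := by
      apply intervalIntegral.integral_mono_on hst (hintS s hs) (hcont2.intervalIntegrable t s)
      intro r hr
      calc Real.sqrt (Φ r) ≤ Real.sqrt (M1 * (r - t)) :=
            Real.sqrt_le_sqrt (step2 r ⟨hr.1, hr.2.trans hs.2⟩)
        _ = Real.sqrt M1 * Real.sqrt (r - t) := Real.sqrt_mul hM1nn _
    have h2 : (∫ r in t..s, Real.sqrt M1 * Real.sqrt (r - t)) =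
        Real.sqrt M1 * (2 / 3 * (s - t) ^ ((3 : ℝ) / 2)) := by
      rw [intervalIntegral.integral_const_mul, hsqrt_int]
    linarith [h1, h2.le]
  have hI : ψ s ≤ M1 * ((s - t) ^ 2 / 2) := by
    have hcont2 : Continuous fun r : ℝ => M1 * (r - t) :=
      continuous_const.mul (continuous_id.sub continuous_const)
    have h1 : ψ s ≤ ∫ r in t..s, M1 * (r - t) := by
      apply intervalIntegral.integral_mono_on hst (hintΦ s hs) (hcont2.intervalIntegrable t s)
      intro r hr
      exact step2 r ⟨hr.1, hr.2.trans hs.2⟩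
    have h2 : (∫ r in t..s, M1 * (r - t)) = M1 * ((s - t) ^ 2 / 2) := by
      rw [intervalIntegral.integral_const_mul, hlin_int]
    linarith [h1, h2.le]
  have hd2 : (s - t) ^ 2 = (s - t) ^ ((1 : ℝ) / 2) * (s - t) ^ ((3 : ℝ) / 2) := by
    rw [← Real.rpow_natCast (s - t) 2, ← Real.rpow_add' hd0 (by norm_num)]
    norm_num
  have hhalf : (s - t) ^ ((1 : ℝ) / 2) ≤ Real.sqrt L := by
    rw [← Real.sqrt_eq_rpow]
    exact hsq
  have hd2le : (s - t) ^ 2 ≤ Real.sqrt L * (s - t) ^ ((3 : ℝ) / 2) := by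
    rw [hd2]
    exact mul_le_mul_of_nonneg_right hhalf hrpow_nn
  have hSnn := hS0 s hs
  have t1 : C * Real.sqrt (s - t) * (∫ r in t..s, Real.sqrt (Φ r)) ≤
      C * Real.sqrt L * (Real.sqrt M1 * (2 / 3 * (s - t) ^ ((3 : ℝ) / 2))) := by
    have hcc : C * Real.sqrt (s - t) ≤ C * Real.sqrt L :=
      mul_le_mul_of_nonneg_left hsq hC.le
    exact mul_le_mul hcc hS hSnn (mul_nonneg hC.le (Real.sqrt_nonneg L))
  have t2 : C * ψ s ≤ C * (M1 * (Real.sqrt L * (s - t) ^ ((3 : ℝ) / 2) / 2)) := by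
    apply mul_le_mul_of_nonneg_left _ hC.le
    calc ψ s ≤ M1 * ((s - t) ^ 2 / 2) := hI
      _ ≤ M1 * (Real.sqrt L * (s - t) ^ ((3 : ℝ) / 2) / 2) := by
          apply mul_le_mul_of_nonneg_left _ hM1nn
          linarith
  have hstart := hineq s hs
  calc Φ s ≤ C * Real.sqrt (s - t) * (∫ r in t..s, Real.sqrt (Φ r)) + C * ψ s := hstart
    _ ≤ C * Real.sqrt L * (Real.sqrt M1 * (2 / 3 * (s - t) ^ ((3 : ℝ) / 2))) +
          C * (M1 * (Real.sqrt L * (s - t) ^ ((3 : ℝ) / 2) / 2)) := by linarith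
    _ = (2 * C * Real.sqrt M1 / 3 + C * M1 / 2) * Real.sqrt L * (s - t) ^ ((3 : ℝ) / 2) := by
          ring
end

section
/- Let (A, ≼) be a nonempty partially ordered set and N : A → ℝ an increasing function (a ≼ b implies N(a) ≤ N(b)) which is bounded above. Suppose every increasing sequence in A has an upper bound in A. Then there exists ā ∈ A such that for every b ∈ A with ā ≼ b, one has N(b) = N(ā). (Brézis–Browder ordering principle.) -/
/-!
Let `β a = supAbove N a` be the supremum of `N` over the elements above `a`. Starting anywhere,
pick `a₀ ≤ a₁ ≤ a₂ ≤ ⋯` with `N aₙ₊₁` within `1/(n+1)` of `β aₙ`, and let `ā` bound this chain.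
For `b ≥ ā` we get `N b ≤ β aₙ < N aₙ₊₁ + 1/(n+1) ≤ N ā + 1/(n+1)` for every `n`,
while `N ā ≤ N b` by monotonicity.
-/

open Set

section
variable {α : Type*} [Preorder α]

noncomputable def supAbove (N : α → ℝ) (a : α) : ℝ := sSup (N '' Ici a)

lemma le_supAbove {N : α → ℝ} (hN : BddAbove (range N)) {a b : α} (hab : a ≤ b) :
    N b ≤ supAbove N a :=
  le_csSup (hN.mono (image_subset_range _ _)) (mem_image_of_mem N hab)

lemma exists_ge_supAbove_sub_lt (N : α → ℝ) (a : α) {ε : ℝ} (hε : 0 < ε) :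
    ∃ c, a ≤ c ∧ supAbove N a - ε < N c := by
  obtain ⟨_, ⟨c, hc, rfl⟩, hlt⟩ :=
    exists_lt_of_lt_csSup (nonempty_Ici.image N) (sub_lt_self (supAbove N a) hε)
  exact ⟨c, hc, hlt⟩

lemma exists_seq_supAbove_sub_lt (N : α → ℝ) (a₀ : α) :
    ∃ s : ℕ → α, (∀ n, s n ≤ s (n + 1)) ∧
      ∀ n : ℕ, supAbove N (s n) - 1 / (n + 1) < N (s (n + 1)) := by
  choose f hle hlt using fun (a : α) (n : ℕ) =>
    exists_ge_supAbove_sub_lt N a (Nat.one_div_pos_of_nat (α := ℝ) (n := n))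
  let s : ℕ → α := fun n => Nat.rec a₀ (fun n a => f a n) n
  exact ⟨s, fun n => hle (s n) n, fun n => hlt (s n) n⟩

lemma apply_eq_of_seq_le_of_le {N : α → ℝ} (hmono : Monotone N) (hN : BddAbove (range N))
    {s : ℕ → α} (hs : ∀ n : ℕ, supAbove N (s n) - 1 / (n + 1) < N (s (n + 1)))
    {ub : α} (hub : ∀ n, s n ≤ ub) {b : α} (hb : ub ≤ b) : N b = N ub := by
  refine le_antisymm (le_of_forall_pos_lt_add fun ε hε => ?_) (hmono hb)
  obtain ⟨n, hn⟩ := exists_nat_one_div_lt hε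
  calc N b ≤ supAbove N (s n) := le_supAbove hN ((hub n).trans hb)
    _ < N (s (n + 1)) + 1 / (n + 1) := by linarith [hs n]
    _ ≤ N ub + 1 / (n + 1) := by gcongr; exact hmono (hub _)
    _ < N ub + ε := by gcongr

end

/-- Brézis–Browder ordering principle: if `N : A → ℝ` is increasing and bounded above on a
nonempty partially ordered set `A` in which every increasing sequence has an upper bound, then
there exists `ā ∈ A` such that `N(b) = N(ā)` for every `b ≥ ā`. -/
theorem brezis_browder {A : Type*} [PartialOrder A] [Nonempty A] (N : A → ℝ)
    (hmono : ∀ a b : A, a ≤ b → N a ≤ N b)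
    (hbdd : ∃ M : ℝ, ∀ a : A, N a ≤ M)
    (hchain : ∀ s : ℕ → A, (∀ n, s n ≤ s (n + 1)) → ∃ ub : A, ∀ n, s n ≤ ub) :
    ∃ abar : A, ∀ b : A, abar ≤ b → N b = N abar := by
  obtain ⟨M, hM⟩ := hbdd
  have hN : BddAbove (range N) := ⟨M, forall_mem_range.2 hM⟩
  obtain ⟨s, hs_mono, hs_approx⟩ := exists_seq_supAbove_sub_lt N (Classical.arbitrary A)
  obtain ⟨ub, hub⟩ := hchain s hs_mono
  exact ⟨ub, fun b => apply_eq_of_seq_le_of_le (fun a b => hmono a b) hN hs_approx hub⟩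
end
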